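/- arXiv:2003.03018 — 2 statements merged into one kernel-verified Lean document; each statement's English description precedes it below -/
import Mathlib

section
/- Let t₁ < t₂ and let a, b : [t₁, t₂] → ℝ be differentiable with a(t) < b(t) for all t. Let D = {(t,y) : t ∈ [t₁, t₂], a(t) ≤ y ≤ b(t)} and suppose u : D → ℝ is continuous, smooth on the interior of D, satisfies the graphical curve shortening flow equation ∂u/∂t = (∂²u/∂y²)/(1 + (∂u/∂y)²) on the interior of D, and u(t, a(t)) = u(t, b(t)) = 0 for all t ∈ [t₁, t₂]. Suppose moreover that θ : D → [−π/2, π/2] is continuous and θ(t,y) = arctan(∂_y u(t,y)) at every interior point of D. Then the function A(t) = ∫_{a(t)}^{b(t)} u(t,y) dy is differentiable on (t₁, t₂) with A'(t) = θ(t, b(t)) − θ(t, a(t)). -/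
set_option maxHeartbeats 4000000

open intervalIntegral Metric Set


/-- **Equation (2.4).** For a graphical curve shortening flow `u` on the moving region
`D = {(t,y) : t ∈ [t₁,t₂], a(t) ≤ y ≤ b(t)}` with zero boundary values, the area under
the graph satisfies `A'(t) = θ(t, b(t)) − θ(t, a(t))`, where `θ = arctan ∂_y u` is the
angle the graph makes with the `y`-axis (extended continuously to `D` with values in
`[−π/2, π/2]`). -/
theorem area_evolution_moving_boundary (t₁ t₂ : ℝ) (ht : t₁ < t₂) (a b : ℝ → ℝ)
    (ha : DifferentiableOn ℝ a (Set.Icc t₁ t₂)) (hb : DifferentiableOn ℝ b (Set.Icc t₁ t₂))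
    (hab : ∀ t ∈ Set.Icc t₁ t₂, a t < b t)
    (D : Set (ℝ × ℝ))
    (hD : D = {p : ℝ × ℝ | p.1 ∈ Set.Icc t₁ t₂ ∧ p.2 ∈ Set.Icc (a p.1) (b p.1)})
    (u : ℝ → ℝ → ℝ)
    (hu_cont : ContinuousOn (fun p : ℝ × ℝ => u p.1 p.2) D)
    (hu_smooth : ContDiffOn ℝ (⊤ : ℕ∞) (fun p : ℝ × ℝ => u p.1 p.2) (interior D))
    (hu_pde : ∀ p ∈ interior D,
      deriv (fun s => u s p.2) p.1 =
        deriv (deriv (u p.1)) p.2 / (1 + (deriv (u p.1) p.2) ^ 2))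
    (hu_bdry : ∀ t ∈ Set.Icc t₁ t₂, u t (a t) = 0 ∧ u t (b t) = 0)
    (θ : ℝ → ℝ → ℝ)
    (hθ_mem : ∀ p ∈ D, θ p.1 p.2 ∈ Set.Icc (-(Real.pi / 2)) (Real.pi / 2))
    (hθ_cont : ContinuousOn (fun p : ℝ × ℝ => θ p.1 p.2) D)
    (hθ_eq : ∀ p ∈ interior D, θ p.1 p.2 = Real.arctan (deriv (u p.1) p.2)) :
    ∀ t ∈ Set.Ioo t₁ t₂,
      HasDerivAt (fun s => ∫ y in a s..b s, u s y) (θ t (b t) - θ t (a t)) t := by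
  intro t₀ ht₀
  have ht₀' : t₀ ∈ Set.Icc t₁ t₂ := ⟨ht₀.1.le, ht₀.2.le⟩
  have haC : ContinuousOn a (Set.Icc t₁ t₂) := ha.continuousOn
  have hbC : ContinuousOn b (Set.Icc t₁ t₂) := hb.continuousOn
  set F : ℝ × ℝ → ℝ := fun p => u p.1 p.2 with hFdef
  -- the open core U
  set U : Set (ℝ × ℝ) :=
    {p : ℝ × ℝ | p.1 ∈ Set.Ioo t₁ t₂ ∧ p.2 ∈ Set.Ioo (a p.1) (b p.1)} with hUdef
  have hU_open : IsOpen U := by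
    rw [isOpen_iff_mem_nhds]
    rintro ⟨s, y⟩ ⟨hs, hy⟩
    have hca : ContinuousAt a s := haC.continuousAt (Icc_mem_nhds hs.1 hs.2)
    have hcb : ContinuousAt b s := hbC.continuousAt (Icc_mem_nhds hs.1 hs.2)
    have h1 : ∀ᶠ p : ℝ × ℝ in nhds (s, y), p.1 ∈ Set.Ioo t₁ t₂ :=
      continuousAt_fst.preimage_mem_nhds (Ioo_mem_nhds hs.1 hs.2)
    have h2 : ∀ᶠ p : ℝ × ℝ in nhds (s, y), a p.1 < p.2 :=
      (hca.comp continuousAt_fst).eventually_lt continuousAt_snd hy.1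
    have h3 : ∀ᶠ p : ℝ × ℝ in nhds (s, y), p.2 < b p.1 :=
      continuousAt_snd.eventually_lt (hcb.comp continuousAt_fst) hy.2
    filter_upwards [h1, h2, h3] with p hp1 hp2 hp3
    exact ⟨hp1, hp2, hp3⟩
  have hUD : U ⊆ D := by
    rintro ⟨s, y⟩ ⟨hs, hy⟩
    rw [hD]
    exact ⟨⟨hs.1.le, hs.2.le⟩, ⟨hy.1.le, hy.2.le⟩⟩
  have hUint : U ⊆ interior D := interior_maximal hUD hU_open
  -- partial derivatives
  have hFd : ∀ p ∈ U, HasFDerivAt F (fderiv ℝ F p) p := fun p hp =>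
    ((hu_smooth.contDiffAt (isOpen_interior.mem_nhds (hUint hp))).differentiableAt
      (by simp)).hasFDerivAt
  set ut : ℝ × ℝ → ℝ := fun p => fderiv ℝ F p (1, 0) with hutdef
  set G2 : ℝ × ℝ → ℝ := fun p => fderiv ℝ F p (0, 1) with hG2def
  have h_ut : ∀ p ∈ U, HasDerivAt (fun x => u x p.2) (ut p) p.1 := by
    rintro ⟨s, y⟩ hp
    have hline : HasDerivAt (fun x : ℝ => ((x, y) : ℝ × ℝ)) (1, 0) s :=
      (hasDerivAt_id s).prodMk (hasDerivAt_const s y)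
    exact (hFd _ hp).comp_hasDerivAt s hline
  have h_uy : ∀ p ∈ U, HasDerivAt (u p.1) (G2 p) p.2 := by
    rintro ⟨s, y⟩ hp
    have hline : HasDerivAt (fun y' : ℝ => ((s, y') : ℝ × ℝ)) (0, 1) y :=
      (hasDerivAt_const y s).prodMk (hasDerivAt_id y)
    exact (hFd _ hp).comp_hasDerivAt y hline
  have hfd : ContDiffOn ℝ (⊤ : ℕ∞) (fun p => fderiv ℝ F p) (interior D) :=
    hu_smooth.fderiv_of_isOpen isOpen_interior (by simp)
  have hut_cd : ContDiffOn ℝ (⊤ : ℕ∞) ut (interior D) := hfd.clm_apply contDiffOn_const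
  have hG2_cd : ContDiffOn ℝ (⊤ : ℕ∞) G2 (interior D) := hfd.clm_apply contDiffOn_const
  have hut_cont : ContinuousOn ut (interior D) := hut_cd.continuousOn
  have hG2d : ∀ p ∈ U, HasFDerivAt G2 (fderiv ℝ G2 p) p := fun p hp =>
    ((hG2_cd.contDiffAt (isOpen_interior.mem_nhds (hUint hp))).differentiableAt
      (by simp)).hasFDerivAt
  have hθ_deriv : ∀ p ∈ U, HasDerivAt (fun y => Real.arctan (G2 (p.1, y))) (ut p) p.2 := by
    rintro ⟨s, y⟩ hp
    have hyd : HasDerivAt (u s) (G2 (s, y)) y := h_uy _ hp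
    have hev : ∀ᶠ y' in nhds y, ((s, y') : ℝ × ℝ) ∈ U :=
      ((Continuous.prodMk_right s).continuousAt).preimage_mem_nhds (hU_open.mem_nhds hp)
    have hder_eq : (fun y' => G2 (s, y')) =ᶠ[nhds y] deriv (u s) := by
      filter_upwards [hev] with y' h using ((h_uy _ h).deriv).symm
    have hline : HasDerivAt (fun y' : ℝ => ((s, y') : ℝ × ℝ)) (0, 1) y :=
      (hasDerivAt_const y s).prodMk (hasDerivAt_id y)
    have hG2y : HasDerivAt (fun y' => G2 (s, y')) (fderiv ℝ G2 (s, y) (0, 1)) y :=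
      (hG2d _ hp).comp_hasDerivAt y hline
    set K := fderiv ℝ G2 (s, y) (0, 1) with hK
    have hyy : HasDerivAt (deriv (u s)) K y := hG2y.congr_of_eventuallyEq hder_eq.symm
    have harc : HasDerivAt (fun y' => Real.arctan (G2 (s, y')))
        ((1 / (1 + G2 (s, y) ^ 2)) * K) y :=
      HasDerivAt.comp y (h₂ := Real.arctan) (Real.hasDerivAt_arctan (G2 (s, y))) hG2y
    have hpde := hu_pde (s, y) (hUint hp)
    have h1 : deriv (fun x => u x y) s = ut (s, y) := (h_ut _ hp).deriv
    have h2 : deriv (u s) y = G2 (s, y) := hyd.deriv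
    have h3 : deriv (deriv (u s)) y = K := hyy.deriv
    simp only [] at hpde
    rw [h1, h2, h3] at hpde
    convert harc using 1
    rw [hpde]; ring
  -- continuity of F and slices
  have hFU_cont : ContinuousOn F U := hu_cont.mono hUD
  -- derivatives of a, b at t₀ and local Lipschitz bounds
  have hda : DifferentiableAt ℝ a t₀ := (ha t₀ ht₀').differentiableAt (Icc_mem_nhds ht₀.1 ht₀.2)
  have hdb : DifferentiableAt ℝ b t₀ := (hb t₀ ht₀').differentiableAt (Icc_mem_nhds ht₀.1 ht₀.2)
  set La : ℝ := |deriv a t₀| + 1 with hLadef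
  set Lb : ℝ := |deriv b t₀| + 1 with hLbdef
  have hLa1 : 1 ≤ La := le_add_of_nonneg_left (abs_nonneg _)
  have hLb1 : 1 ≤ Lb := le_add_of_nonneg_left (abs_nonneg _)
  have hLa0 : (0:ℝ) < La := lt_of_lt_of_le one_pos hLa1
  have hLb0 : (0:ℝ) < Lb := lt_of_lt_of_le one_pos hLb1
  clear_value La Lb
  have haLip : ∀ᶠ s in nhds t₀, |a s - a t₀| ≤ La * |s - t₀| := by
    have h := (hasDerivAt_iff_isLittleO.1 hda.hasDerivAt).def one_pos
    filter_upwards [h] with s hs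
    have h2 : |a s - a t₀ - (s - t₀) * deriv a t₀| ≤ |s - t₀| := by
      simpa [Real.norm_eq_abs, smul_eq_mul] using hs
    have h3 := abs_add_le (a s - a t₀ - (s - t₀) * deriv a t₀) ((s - t₀) * deriv a t₀)
    simp only [sub_add_cancel] at h3
    have h4 : |(s - t₀) * deriv a t₀| = |s - t₀| * |deriv a t₀| := abs_mul _ _
    rw [hLadef]; nlinarith [abs_nonneg (s - t₀)]
  have hbLip : ∀ᶠ s in nhds t₀, |b s - b t₀| ≤ Lb * |s - t₀| := by
    have h := (hasDerivAt_iff_isLittleO.1 hdb.hasDerivAt).def one_pos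
    filter_upwards [h] with s hs
    have h2 : |b s - b t₀ - (s - t₀) * deriv b t₀| ≤ |s - t₀| := by
      simpa [Real.norm_eq_abs, smul_eq_mul] using hs
    have h3 := abs_add_le (b s - b t₀ - (s - t₀) * deriv b t₀) ((s - t₀) * deriv b t₀)
    simp only [sub_add_cancel] at h3
    have h4 : |(s - t₀) * deriv b t₀| = |s - t₀| * |deriv b t₀| := abs_mul _ _
    rw [hLbdef]; nlinarith [abs_nonneg (s - t₀)]
  obtain ⟨δ₀, hδ₀pos, hδ₀⟩ := Metric.eventually_nhds_iff.1 (haLip.and hbLip)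
  -- start the little-o argument
  rw [hasDerivAt_iff_isLittleO, Asymptotics.isLittleO_iff]
  intro c hc
  set Q : ℝ := 6 * La + 6 * Lb + 2 with hQdef
  have hQ0 : (0:ℝ) < Q := by positivity
  set η : ℝ := c / Q with hηdef
  have hη : (0:ℝ) < η := div_pos hc hQ0
  clear_value Q η
  -- continuity radii at the two corner points
  have hpaD : ((t₀, a t₀) : ℝ × ℝ) ∈ D := by
    rw [hD]; exact ⟨ht₀', ⟨le_refl _, (hab t₀ ht₀').le⟩⟩
  have hpbD : ((t₀, b t₀) : ℝ × ℝ) ∈ D := by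
    rw [hD]; exact ⟨ht₀', ⟨(hab t₀ ht₀').le, le_refl _⟩⟩
  obtain ⟨ρ1, hρ1pos, hρ1⟩ := Metric.continuousWithinAt_iff.1 (hθ_cont _ hpaD) η hη
  obtain ⟨ρ2, hρ2pos, hρ2⟩ := Metric.continuousWithinAt_iff.1 (hθ_cont _ hpbD) η hη
  obtain ⟨ρ3, hρ3pos, hρ3⟩ := Metric.continuousWithinAt_iff.1 (hu_cont _ hpaD) η hη
  obtain ⟨ρ4, hρ4pos, hρ4⟩ := Metric.continuousWithinAt_iff.1 (hu_cont _ hpbD) η hη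
  set ρ : ℝ := min (min ρ1 ρ2) (min ρ3 ρ4) with hρdef
  have hρpos : (0:ℝ) < ρ := by
    simp only [hρdef, lt_min_iff]; exact ⟨⟨hρ1pos, hρ2pos⟩, ⟨hρ3pos, hρ4pos⟩⟩
  have hρρ1 : ρ ≤ ρ1 := le_trans (min_le_left _ _) (min_le_left _ _)
  have hρρ2 : ρ ≤ ρ2 := le_trans (min_le_left _ _) (min_le_right _ _)
  have hρρ3 : ρ ≤ ρ3 := le_trans (min_le_right _ _) (min_le_left _ _)
  have hρρ4 : ρ ≤ ρ4 := le_trans (min_le_right _ _) (min_le_right _ _)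
  clear_value ρ
  set P : ℝ := 2 * La + 2 * Lb with hPdef
  have hP0 : (0:ℝ) < P := by positivity
  have hP4 : (1:ℝ) ≤ P := by rw [hPdef]; linarith
  set δ : ℝ := min δ₀ (min (min (t₀ - t₁) (t₂ - t₀))
      (min ((b t₀ - a t₀) / (P + 1)) (ρ / P))) with hδdef
  have hδpos : (0:ℝ) < δ := by
    have h1 : (0:ℝ) < b t₀ - a t₀ := sub_pos.2 (hab t₀ ht₀')
    simp only [hδdef, lt_min_iff]
    refine ⟨hδ₀pos, ⟨⟨by linarith [ht₀.1], by linarith [ht₀.2]⟩,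
      ⟨by positivity, by positivity⟩⟩⟩
  rw [Metric.eventually_nhds_iff]
  refine ⟨δ, hδpos, fun t htδ => ?_⟩
  rcases eq_or_ne t t₀ with rfl | htne
  · simp
  -- now the main estimate for a fixed t
  set r : ℝ := |t - t₀| with hrdef
  have hr0 : (0:ℝ) < r := abs_pos.2 (sub_ne_zero.2 htne)
  have hrδ : r < δ := by rw [hrdef, ← Real.dist_eq]; exact htδ
  clear_value r
  set m : ℝ := a t₀ + 2 * La * r with hmdef
  set M : ℝ := b t₀ - 2 * Lb * r with hMdef
  clear_value m M
  have hδδ₀ : δ ≤ δ₀ := min_le_left _ _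
  have hδt₁ : δ ≤ t₀ - t₁ := le_trans (min_le_right _ _)
    (le_trans (min_le_left _ _) (min_le_left _ _))
  have hδt₂ : δ ≤ t₂ - t₀ := le_trans (min_le_right _ _)
    (le_trans (min_le_left _ _) (min_le_right _ _))
  have hδba : δ ≤ (b t₀ - a t₀) / (P + 1) := le_trans (min_le_right _ _)
    (le_trans (min_le_right _ _) (min_le_left _ _))
  have hδρ : δ ≤ ρ / P := le_trans (min_le_right _ _)
    (le_trans (min_le_right _ _) (min_le_right _ _))
  clear_value δ P
  have hPrρ : P * r < ρ := by
    have := mul_lt_mul_of_pos_left hrδ hP0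
    have h2 : P * δ ≤ ρ := by
      rw [← le_div_iff₀' hP0]; exact hδρ
    linarith
  have hsr : ∀ s ∈ Set.uIcc t₀ t, |s - t₀| ≤ r := by
    intro s hs
    rcases le_total t₀ t with h | h
    · rw [Set.uIcc_of_le h] at hs
      rw [hrdef, abs_of_nonneg (by linarith [hs.1] : (0:ℝ) ≤ s - t₀),
        abs_of_nonneg (by linarith : (0:ℝ) ≤ t - t₀)]
      linarith [hs.2]
    · rw [Set.uIcc_of_ge h] at hs
      rw [hrdef, abs_of_nonpos (by linarith [hs.2] : s - t₀ ≤ (0:ℝ)),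
        abs_of_nonpos (by linarith : t - t₀ ≤ (0:ℝ))]
      linarith [hs.1]
  have hIoo : ∀ s ∈ Set.uIcc t₀ t, s ∈ Set.Ioo t₁ t₂ := by
    intro s hs
    have h := lt_of_le_of_lt (hsr s hs) hrδ
    rw [abs_lt] at h
    constructor <;> linarith
  have haLip' : ∀ s ∈ Set.uIcc t₀ t, |a s - a t₀| ≤ La * r := by
    intro s hs
    have h := (hδ₀ (show dist s t₀ < δ₀ by
      rw [Real.dist_eq]; exact lt_of_le_of_lt (hsr s hs) (lt_of_lt_of_le hrδ hδδ₀))).1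
    exact le_trans h (mul_le_mul_of_nonneg_left (hsr s hs) hLa0.le)
  have hbLip' : ∀ s ∈ Set.uIcc t₀ t, |b s - b t₀| ≤ Lb * r := by
    intro s hs
    have h := (hδ₀ (show dist s t₀ < δ₀ by
      rw [Real.dist_eq]; exact lt_of_le_of_lt (hsr s hs) (lt_of_lt_of_le hrδ hδδ₀))).2
    exact le_trans h (mul_le_mul_of_nonneg_left (hsr s hs) hLb0.le)
  have hm_as : ∀ s ∈ Set.uIcc t₀ t, a s < m := by
    intro s hs
    have h := (abs_le.1 (haLip' s hs)).2
    have : La * r < 2 * La * r := by linarith [mul_pos hLa0 hr0]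
    rw [hmdef]; linarith
  have hM_bs : ∀ s ∈ Set.uIcc t₀ t, M < b s := by
    intro s hs
    have h := (abs_le.1 (hbLip' s hs)).1
    have : Lb * r < 2 * Lb * r := by linarith [mul_pos hLb0 hr0]
    rw [hMdef]; linarith
  have hmM : m < M := by
    have h0 : (0:ℝ) < b t₀ - a t₀ := sub_pos.2 (hab t₀ ht₀')
    have h1 : P * δ ≤ P * ((b t₀ - a t₀) / (P + 1)) := mul_le_mul_of_nonneg_left hδba hP0.le
    have h2 : P * ((b t₀ - a t₀) / (P + 1)) < b t₀ - a t₀ := by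
      have key : P / (P + 1) < 1 := (div_lt_one (by linarith)).2 (by linarith)
      calc P * ((b t₀ - a t₀) / (P + 1)) = P / (P + 1) * (b t₀ - a t₀) := by ring
        _ < 1 * (b t₀ - a t₀) := by nlinarith
        _ = b t₀ - a t₀ := one_mul _
    have h4 : P * r < P * δ := mul_lt_mul_of_pos_left hrδ hP0
    have h3 : P * r < b t₀ - a t₀ := by linarith
    rw [hPdef] at h3
    rw [hmdef, hMdef]
    nlinarith
  have hmemU : ∀ s ∈ Set.uIcc t₀ t, ∀ y ∈ Set.Icc m M, ((s, y) : ℝ × ℝ) ∈ U := by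
    intro s hs y hy
    exact ⟨hIoo s hs, ⟨lt_of_lt_of_le (hm_as s hs) hy.1, lt_of_le_of_lt hy.2 (hM_bs s hs)⟩⟩
  have h2Lar : 2 * La * r ≤ P * r := by rw [hPdef]; nlinarith [mul_pos hLb0 hr0]
  have h2Lbr : 2 * Lb * r ≤ P * r := by rw [hPdef]; nlinarith [mul_pos hLa0 hr0]
  have hrPr : r ≤ P * r := by nlinarith
  have hDmem : ∀ s ∈ Set.uIcc t₀ t, s ∈ Set.Icc t₁ t₂ := fun s hs =>
    ⟨(hIoo s hs).1.le, (hIoo s hs).2.le⟩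
  have hcont_s : ∀ s ∈ Set.uIcc t₀ t, ContinuousOn (u s) (Set.Icc (a s) (b s)) := by
    intro s hs
    have h : ContinuousOn (fun y => F (s, y)) (Set.Icc (a s) (b s)) :=
      hu_cont.comp ((Continuous.prodMk_right s).continuousOn)
        (fun y hy => by rw [hD]; exact ⟨hDmem s hs, hy⟩)
    exact h
  have hmbs : ∀ s ∈ Set.uIcc t₀ t, m ≤ b s := fun s hs => le_trans hmM.le (hM_bs s hs).le
  have hasM : ∀ s ∈ Set.uIcc t₀ t, a s ≤ M := fun s hs => le_trans (hm_as s hs).le hmM.le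
  have hint1 : ∀ s ∈ Set.uIcc t₀ t, IntervalIntegrable (u s) MeasureTheory.volume (a s) m :=
    fun s hs => ((hcont_s s hs).mono (by
      rw [Set.uIcc_of_le (hm_as s hs).le]
      exact Set.Icc_subset_Icc (le_refl _) (hmbs s hs))).intervalIntegrable
  have hint2 : ∀ s ∈ Set.uIcc t₀ t, IntervalIntegrable (u s) MeasureTheory.volume m M :=
    fun s hs => ((hcont_s s hs).mono (by
      rw [Set.uIcc_of_le hmM.le]
      exact Set.Icc_subset_Icc (hm_as s hs).le (hM_bs s hs).le)).intervalIntegrable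
  have hint3 : ∀ s ∈ Set.uIcc t₀ t, IntervalIntegrable (u s) MeasureTheory.volume M (b s) :=
    fun s hs => ((hcont_s s hs).mono (by
      rw [Set.uIcc_of_le (hM_bs s hs).le]
      exact Set.Icc_subset_Icc (hasM s hs) (le_refl _))).intervalIntegrable
  have hsplit : ∀ s ∈ Set.uIcc t₀ t, (∫ y in a s..b s, u s y) =
      (∫ y in a s..m, u s y) + (∫ y in m..M, u s y) + (∫ y in M..b s, u s y) := by
    intro s hs
    have e1 := intervalIntegral.integral_add_adjacent_intervals (hint2 s hs) (hint3 s hs)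
    have e2 := intervalIntegral.integral_add_adjacent_intervals (hint1 s hs)
      ((hint2 s hs).trans (hint3 s hs))
    linarith
  -- edge estimates
  have hedge_a : ∀ s ∈ Set.uIcc t₀ t, ∀ y ∈ Set.uIoc (a s) m, |u s y| ≤ η := by
    intro s hs y hy
    rw [Set.uIoc_of_le (hm_as s hs).le] at hy
    have hyD : ((s, y) : ℝ × ℝ) ∈ D := by
      rw [hD]
      exact ⟨hDmem s hs, ⟨hy.1.le, le_trans hy.2 (hmbs s hs)⟩⟩
    have habs := abs_le.1 (haLip' s hs)
    have hym : y ≤ a t₀ + 2 * La * r := hmdef ▸ hy.2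
    have hd : dist ((s, y) : ℝ × ℝ) ((t₀, a t₀) : ℝ × ℝ) < ρ3 := by
      rw [Prod.dist_eq]
      refine max_lt ?_ ?_
      · rw [Real.dist_eq]
        exact lt_of_le_of_lt (le_trans (hsr s hs) hrPr) (lt_of_lt_of_le hPrρ hρρ3)
      · rw [Real.dist_eq, abs_lt]
        constructor
        · have : a t₀ - y < La * r := by linarith [hy.1, habs.1]
          nlinarith [mul_pos hLa0 hr0]
        · have : y - a t₀ ≤ 2 * La * r := by linarith
          exact lt_of_le_of_lt (le_trans this h2Lar) (lt_of_lt_of_le hPrρ hρρ3)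
    have hu0 : u t₀ (a t₀) = 0 := (hu_bdry t₀ ht₀').1
    have h := hρ3 hyD hd
    rw [Real.dist_eq] at h
    have h2 : F ((s, y) : ℝ × ℝ) = u s y := rfl
    have h3 : F ((t₀, a t₀) : ℝ × ℝ) = 0 := by rw [hFdef]; exact hu0
    rw [h2, h3, sub_zero] at h
    exact h.le
  have hedge_b : ∀ s ∈ Set.uIcc t₀ t, ∀ y ∈ Set.uIoc M (b s), |u s y| ≤ η := by
    intro s hs y hy
    rw [Set.uIoc_of_le (hM_bs s hs).le] at hy
    have hyD : ((s, y) : ℝ × ℝ) ∈ D := by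
      rw [hD]
      exact ⟨hDmem s hs, ⟨le_trans (hasM s hs) hy.1.le, hy.2⟩⟩
    have habs := abs_le.1 (hbLip' s hs)
    have hyM : b t₀ - 2 * Lb * r ≤ y := le_of_lt (hMdef ▸ hy.1)
    have hd : dist ((s, y) : ℝ × ℝ) ((t₀, b t₀) : ℝ × ℝ) < ρ4 := by
      rw [Prod.dist_eq]
      refine max_lt ?_ ?_
      · rw [Real.dist_eq]
        exact lt_of_le_of_lt (le_trans (hsr s hs) hrPr) (lt_of_lt_of_le hPrρ hρρ4)
      · rw [Real.dist_eq, abs_lt]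
        constructor
        · have : b t₀ - y ≤ 2 * Lb * r := by linarith
          have h5 : -(2 * Lb * r) ≤ y - b t₀ := by linarith
          have h6 : 2 * Lb * r < ρ4 := lt_of_le_of_lt h2Lbr (lt_of_lt_of_le hPrρ hρρ4)
          linarith
        · have : y - b t₀ ≤ Lb * r := by linarith [hy.2, habs.2]
          have h6 : 2 * Lb * r < ρ4 := lt_of_le_of_lt h2Lbr (lt_of_lt_of_le hPrρ hρρ4)
          nlinarith [mul_pos hLb0 hr0]
    have hu0 : u t₀ (b t₀) = 0 := (hu_bdry t₀ ht₀').2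
    have h := hρ4 hyD hd
    rw [Real.dist_eq] at h
    have h2 : F ((s, y) : ℝ × ℝ) = u s y := rfl
    have h3 : F ((t₀, b t₀) : ℝ × ℝ) = 0 := by rw [hFdef]; exact hu0
    rw [h2, h3, sub_zero] at h
    exact h.le
  have hEa : ∀ s ∈ Set.uIcc t₀ t, |∫ y in a s..m, u s y| ≤ η * (3 * La * r) := by
    intro s hs
    have h1 : ‖∫ y in a s..m, u s y‖ ≤ η * |m - a s| :=
      intervalIntegral.norm_integral_le_of_norm_le_const (fun y hy => by
        rw [Real.norm_eq_abs]; exact hedge_a s hs y hy)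
    have h2 : |m - a s| ≤ 3 * La * r := by
      have h3 := abs_le.1 (haLip' s hs)
      rw [abs_of_nonneg (by linarith [hm_as s hs] : (0:ℝ) ≤ m - a s), hmdef]
      linarith [h3.1]
    rw [Real.norm_eq_abs] at h1
    exact le_trans h1 (mul_le_mul_of_nonneg_left h2 hη.le)
  have hEb : ∀ s ∈ Set.uIcc t₀ t, |∫ y in M..b s, u s y| ≤ η * (3 * Lb * r) := by
    intro s hs
    have h1 : ‖∫ y in M..b s, u s y‖ ≤ η * |b s - M| :=
      intervalIntegral.norm_integral_le_of_norm_le_const (fun y hy => by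
        rw [Real.norm_eq_abs]; exact hedge_b s hs y hy)
    have h2 : |b s - M| ≤ 3 * Lb * r := by
      have h3 := abs_le.1 (hbLip' s hs)
      rw [abs_of_nonneg (by linarith [hM_bs s hs] : (0:ℝ) ≤ b s - M), hMdef]
      linarith [h3.2]
    rw [Real.norm_eq_abs] at h1
    exact le_trans h1 (mul_le_mul_of_nonneg_left h2 hη.le)
  -- θ closeness on the core boundary
  have hθM : ∀ s ∈ Set.uIcc t₀ t, |θ s M - θ t₀ (b t₀)| ≤ η := by
    intro s hs
    have hMD : ((s, M) : ℝ × ℝ) ∈ D := hUD (hmemU s hs M ⟨hmM.le, le_refl _⟩)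
    have hd : dist ((s, M) : ℝ × ℝ) ((t₀, b t₀) : ℝ × ℝ) < ρ2 := by
      rw [Prod.dist_eq]
      refine max_lt ?_ ?_
      · rw [Real.dist_eq]
        exact lt_of_le_of_lt (le_trans (hsr s hs) hrPr) (lt_of_lt_of_le hPrρ hρρ2)
      · rw [Real.dist_eq, hMdef]
        have h1 : |b t₀ - 2 * Lb * r - b t₀| = 2 * Lb * r := by
          rw [show b t₀ - 2 * Lb * r - b t₀ = -(2 * Lb * r) by ring, abs_neg,
            abs_of_nonneg (by positivity)]
        rw [h1]
        exact lt_of_le_of_lt h2Lbr (lt_of_lt_of_le hPrρ hρρ2)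
    have h := hρ2 hMD hd
    rw [Real.dist_eq] at h
    exact h.le
  have hθm : ∀ s ∈ Set.uIcc t₀ t, |θ s m - θ t₀ (a t₀)| ≤ η := by
    intro s hs
    have hmD : ((s, m) : ℝ × ℝ) ∈ D := hUD (hmemU s hs m ⟨le_refl _, hmM.le⟩)
    have hd : dist ((s, m) : ℝ × ℝ) ((t₀, a t₀) : ℝ × ℝ) < ρ1 := by
      rw [Prod.dist_eq]
      refine max_lt ?_ ?_
      · rw [Real.dist_eq]
        exact lt_of_le_of_lt (le_trans (hsr s hs) hrPr) (lt_of_lt_of_le hPrρ hρρ1)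
      · rw [Real.dist_eq, hmdef]
        have h1 : |a t₀ + 2 * La * r - a t₀| = 2 * La * r := by
          rw [show a t₀ + 2 * La * r - a t₀ = 2 * La * r by ring,
            abs_of_nonneg (by positivity)]
        rw [h1]
        exact lt_of_le_of_lt h2Lar (lt_of_lt_of_le hPrρ hρρ1)
    have h := hρ1 hmD hd
    rw [Real.dist_eq] at h
    exact h.le
  -- the core integral Φ and its derivative
  set Φ : ℝ → ℝ := fun s => ∫ y in m..M, u s y with hΦdef
  have hKc_comp : IsCompact ((Set.uIcc t₀ t) ×ˢ (Set.Icc m M)) :=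
    isCompact_uIcc.prod isCompact_Icc
  have hKcU : (Set.uIcc t₀ t) ×ˢ (Set.Icc m M) ⊆ U := by
    rintro ⟨s, y⟩ ⟨hs, hy⟩
    exact hmemU s hs y hy
  obtain ⟨ε, hεpos, hthick⟩ := hKc_comp.exists_thickening_subset_open hU_open hKcU
  have hball : ∀ s₀ ∈ Set.uIcc t₀ t, ∀ x : ℝ, |x - s₀| < ε → ∀ y ∈ Set.Icc m M,
      ((x, y) : ℝ × ℝ) ∈ U := by
    intro s₀ hs₀ x hx y hy
    apply hthick
    rw [Metric.mem_thickening_iff]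
    refine ⟨(s₀, y), ⟨hs₀, hy⟩, ?_⟩
    rw [Prod.dist_eq]
    exact max_lt (by rwa [Real.dist_eq]) (by simpa using hεpos)
  have hcthick_sub : Metric.cthickening (ε/2) ((Set.uIcc t₀ t) ×ˢ (Set.Icc m M)) ⊆ U :=
    (Metric.cthickening_subset_thickening' hεpos (by linarith) _).trans hthick
  obtain ⟨C, hC⟩ := hKc_comp.cthickening.exists_bound_of_continuousOn
    (hut_cont.mono (hcthick_sub.trans hUint))
  have hΦd : ∀ s₀ ∈ Set.uIcc t₀ t, HasDerivAt Φ (θ s₀ M - θ s₀ m) s₀ := by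
    intro s₀ hs₀
    have hε2 : (0:ℝ) < ε/2 := by linarith
    have hmem2 : ∀ x ∈ Metric.ball s₀ (ε/2), ∀ y ∈ Set.Icc m M, ((x, y) : ℝ × ℝ) ∈ U := by
      intro x hx y hy
      refine hball s₀ hs₀ x ?_ y hy
      rw [← Real.dist_eq]
      exact lt_trans (Metric.mem_ball.1 hx) (by linarith)
    have hIoc_sub : Set.uIoc m M ⊆ Set.Icc m M := by
      rw [Set.uIoc_of_le hmM.le]; exact Set.Ioc_subset_Icc_self
    have hmeas : ∀ᶠ x in nhds s₀, MeasureTheory.AEStronglyMeasurable (u x)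
        (MeasureTheory.volume.restrict (Set.uIoc m M)) := by
      filter_upwards [Metric.ball_mem_nhds s₀ hε2] with x hx
      have hcont : ContinuousOn (fun y => F (x, y)) (Set.uIoc m M) :=
        hFU_cont.comp ((Continuous.prodMk_right x).continuousOn)
          (fun y hy => hmem2 x hx y (hIoc_sub hy))
      exact hcont.aestronglyMeasurable measurableSet_uIoc
    have hint : IntervalIntegrable (u s₀) MeasureTheory.volume m M := hint2 s₀ hs₀
    have hmeas' : MeasureTheory.AEStronglyMeasurable (fun y => ut (s₀, y))
        (MeasureTheory.volume.restrict (Set.uIoc m M)) := by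
      have hcont : ContinuousOn (fun y => ut (s₀, y)) (Set.uIoc m M) :=
        hut_cont.comp ((Continuous.prodMk_right s₀).continuousOn)
          (fun y hy => hUint (hmemU s₀ hs₀ y (hIoc_sub hy)))
      exact hcont.aestronglyMeasurable measurableSet_uIoc
    have hbound : ∀ᵐ y ∂MeasureTheory.volume, y ∈ Set.uIoc m M →
        ∀ x ∈ Metric.ball s₀ (ε/2), ‖ut (x, y)‖ ≤ C := by
      refine MeasureTheory.ae_of_all _ (fun y hy x hx => ?_)
      refine hC (x, y) ?_
      refine Metric.mem_cthickening_of_dist_le ((x, y) : ℝ × ℝ) ((s₀, y) : ℝ × ℝ) _ _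
        ⟨hs₀, hIoc_sub hy⟩ ?_
      rw [Prod.dist_eq]
      refine max_le (le_of_lt (Metric.mem_ball.1 hx)) (by rw [dist_self]; linarith)
    have hbint : IntervalIntegrable (fun _ : ℝ => C) MeasureTheory.volume m M :=
      intervalIntegrable_const
    have hdiff : ∀ᵐ y ∂MeasureTheory.volume, y ∈ Set.uIoc m M →
        ∀ x ∈ Metric.ball s₀ (ε/2), HasDerivAt (fun x => u x y) (ut (x, y)) x :=
      MeasureTheory.ae_of_all _ (fun y hy x hx => h_ut (x, y) (hmem2 x hx y (hIoc_sub hy)))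
    have key := (intervalIntegral.hasDerivAt_integral_of_dominated_loc_of_deriv_le
      (F := u) (F' := fun x y => ut (x, y)) (bound := fun _ => C)
      (Metric.ball_mem_nhds s₀ hε2) hmeas hint hmeas' hbound hbint hdiff).2
    have hFTC : (∫ y in m..M, ut (s₀, y)) = θ s₀ M - θ s₀ m := by
      have hder : ∀ y ∈ Set.uIcc m M, HasDerivAt (fun y => Real.arctan (G2 (s₀, y)))
          (ut (s₀, y)) y := by
        intro y hy
        rw [Set.uIcc_of_le hmM.le] at hy
        exact hθ_deriv (s₀, y) (hmemU s₀ hs₀ y hy)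
      have hint' : IntervalIntegrable (fun y => ut (s₀, y)) MeasureTheory.volume m M := by
        apply ContinuousOn.intervalIntegrable
        exact hut_cont.comp ((Continuous.prodMk_right s₀).continuousOn)
          (fun y hy => hUint (hmemU s₀ hs₀ y (by rwa [Set.uIcc_of_le hmM.le] at hy)))
      rw [intervalIntegral.integral_eq_sub_of_hasDerivAt hder hint']
      have hMU : ((s₀, M) : ℝ × ℝ) ∈ U := hmemU s₀ hs₀ M ⟨hmM.le, le_refl _⟩
      have hmU : ((s₀, m) : ℝ × ℝ) ∈ U := hmemU s₀ hs₀ m ⟨le_refl _, hmM.le⟩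
      have e1 : θ s₀ M = Real.arctan (deriv (u s₀) M) := hθ_eq (s₀, M) (hUint hMU)
      have e2 : θ s₀ m = Real.arctan (deriv (u s₀) m) := hθ_eq (s₀, m) (hUint hmU)
      have e3 : deriv (u s₀) M = G2 (s₀, M) := (h_uy (s₀, M) hMU).deriv
      have e4 : deriv (u s₀) m = G2 (s₀, m) := (h_uy (s₀, m) hmU).deriv
      rw [e1, e2, e3, e4]
    rw [← hFTC]
    exact key
  -- FTC in time for the core
  have hθMc : ContinuousOn (fun s => θ s M) (Set.uIcc t₀ t) := by
    have h : ContinuousOn ((fun p : ℝ × ℝ => θ p.1 p.2) ∘ (fun s => ((s, M) : ℝ × ℝ)))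
        (Set.uIcc t₀ t) :=
      hθ_cont.comp ((continuous_id.prodMk continuous_const).continuousOn)
        (fun s hs => hUD (hmemU s hs M ⟨hmM.le, le_refl _⟩))
    exact h
  have hθmc : ContinuousOn (fun s => θ s m) (Set.uIcc t₀ t) := by
    have h : ContinuousOn ((fun p : ℝ × ℝ => θ p.1 p.2) ∘ (fun s => ((s, m) : ℝ × ℝ)))
        (Set.uIcc t₀ t) :=
      hθ_cont.comp ((continuous_id.prodMk continuous_const).continuousOn)
        (fun s hs => hUD (hmemU s hs m ⟨le_refl _, hmM.le⟩))
    exact h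
  have hθint : IntervalIntegrable (fun s => θ s M - θ s m) MeasureTheory.volume t₀ t :=
    (hθMc.sub hθmc).intervalIntegrable
  have hB : (∫ s in t₀..t, (θ s M - θ s m)) = Φ t - Φ t₀ :=
    intervalIntegral.integral_eq_sub_of_hasDerivAt (fun s hs => hΦd s hs) hθint
  set g : ℝ := θ t₀ (b t₀) - θ t₀ (a t₀) with hgdef
  have hcore : |Φ t - Φ t₀ - (t - t₀) * g| ≤ 2 * η * r := by
    rw [← hB]
    have hconst : (t - t₀) * g = ∫ _ in t₀..t, g := by
      rw [intervalIntegral.integral_const, smul_eq_mul]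
    rw [hconst, ← intervalIntegral.integral_sub hθint intervalIntegrable_const]
    have hptwise : ∀ s ∈ Set.uIoc t₀ t, ‖θ s M - θ s m - g‖ ≤ 2 * η := by
      intro s hs
      have hs' : s ∈ Set.uIcc t₀ t := Set.uIoc_subset_uIcc hs
      have h1 := hθM s hs'
      have h2 := hθm s hs'
      have h3 := abs_add_le (θ s M - θ t₀ (b t₀)) (-(θ s m - θ t₀ (a t₀)))
      rw [abs_neg] at h3
      have h4 : θ s M - θ t₀ (b t₀) + -(θ s m - θ t₀ (a t₀)) = θ s M - θ s m - g := by
        rw [hgdef]; ring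
      rw [h4] at h3
      rw [Real.norm_eq_abs]
      linarith
    have h5 := intervalIntegral.norm_integral_le_of_norm_le_const hptwise
    rw [Real.norm_eq_abs, ← hrdef] at h5
    exact h5
  -- final assembly
  have hsplit_t := hsplit t Set.right_mem_uIcc
  have hsplit_t₀ := hsplit t₀ Set.left_mem_uIcc
  have hEat := hEa t Set.right_mem_uIcc
  have hEat₀ := hEa t₀ Set.left_mem_uIcc
  have hEbt := hEb t Set.right_mem_uIcc
  have hEbt₀ := hEb t₀ Set.left_mem_uIcc
  have hηQ : η * Q = c := by
    rw [hηdef]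
    field_simp
  show ‖(∫ y in a t..b t, u t y) - (∫ y in a t₀..b t₀, u t₀ y) - (t - t₀) • g‖ ≤ c * ‖t - t₀‖
  rw [smul_eq_mul, Real.norm_eq_abs, Real.norm_eq_abs, ← hrdef, hsplit_t, hsplit_t₀]
  set Ct : ℝ := ∫ y in m..M, u t y with hCt
  set Ct₀ : ℝ := ∫ y in m..M, u t₀ y with hCt₀
  set E1t : ℝ := ∫ y in a t..m, u t y with hE1t
  set E1t₀ : ℝ := ∫ y in a t₀..m, u t₀ y with hE1t₀
  set E3t : ℝ := ∫ y in M..b t, u t y with hE3t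
  set E3t₀ : ℝ := ∫ y in M..b t₀, u t₀ y with hE3t₀
  have hcore2 : |Ct - Ct₀ - (t - t₀) * g| ≤ 2 * η * r := hcore
  have h9 : |E1t - E1t₀| ≤ |E1t| + |E1t₀| := by
    rw [sub_eq_add_neg]
    exact le_trans (abs_add_le _ _) (by rw [abs_neg])
  have h10 : |E3t - E3t₀| ≤ |E3t| + |E3t₀| := by
    rw [sub_eq_add_neg]
    exact le_trans (abs_add_le _ _) (by rw [abs_neg])
  have h11 := abs_add_le (Ct - Ct₀ - (t - t₀) * g) ((E1t - E1t₀) + (E3t - E3t₀))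
  have h12 := abs_add_le (E1t - E1t₀) (E3t - E3t₀)
  have h13 : (E1t + Ct + E3t) - (E1t₀ + Ct₀ + E3t₀) - (t - t₀) * g =
      (Ct - Ct₀ - (t - t₀) * g) + ((E1t - E1t₀) + (E3t - E3t₀)) := by ring
  rw [h13]
  calc |Ct - Ct₀ - (t - t₀) * g + (E1t - E1t₀ + (E3t - E3t₀))|
      ≤ |Ct - Ct₀ - (t - t₀) * g| + |E1t - E1t₀ + (E3t - E3t₀)| := abs_add_le _ _
    _ ≤ |Ct - Ct₀ - (t - t₀) * g| + (|E1t - E1t₀| + |E3t - E3t₀|) := by linarith [h12]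
    _ ≤ 2 * η * r + ((|E1t| + |E1t₀|) + (|E3t| + |E3t₀|)) := by linarith [hcore2, h9, h10]
    _ ≤ 2 * η * r + ((η * (3 * La * r) + η * (3 * La * r)) +
        (η * (3 * Lb * r) + η * (3 * Lb * r))) := by linarith [hEat, hEat₀, hEbt, hEbt₀]
    _ = η * Q * r := by rw [hQdef]; ring
    _ = c * r := by rw [hηQ]
end

section
/- Let a > 0, c ∈ ℝ and β ∈ ℝ, and define the Grim Reaper barrier v(t,y) = −a⁻¹ · ln(sin(a(y − c))) + a·t + β for t ∈ ℝ and y in the slab (c, c + π/a). Let t₁ < t₂ and suppose u : [t₁, t₂] × (c, c + π/a) → ℝ is continuous and bounded, smooth on (t₁, t₂) × (c, c + π/a), and satisfies there the graphical curve shortening flow equation ∂u/∂t = (∂²u/∂y²)/(1 + (∂u/∂y)²). If u(t₁, y) ≤ v(t₁, y) for all y ∈ (c, c + π/a), then u(t, y) ≤ v(t, y) for all t ∈ [t₁, t₂] and all y ∈ (c, c + π/a). -/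
open Set Filter Topology

/-- At a right-endpoint maximum, the (two-sided) derivative is nonnegative. -/
lemma deriv_nonneg_of_isMaxOn_Icc {h : ℝ → ℝ} {t₀ t : ℝ} (hlt : t₀ < t)
    (hdiff : DifferentiableAt ℝ h t) (hmax : ∀ s ∈ Set.Icc t₀ t, h s ≤ h t) :
    0 ≤ deriv h t := by
  have hd := hdiff.hasDerivAt
  have hs := hasDerivAt_iff_tendsto_slope.1 hd
  have htend : Tendsto (slope h t) (𝓝[<] t) (𝓝 (deriv h t)) :=
    hs.mono_left (nhdsWithin_mono _ (fun y hy => ne_of_lt hy))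
  refine ge_of_tendsto htend ?_
  filter_upwards [Ioo_mem_nhdsLT_of_mem (Set.mem_Ioc.2 ⟨hlt, le_refl t⟩)] with s hs'
  rw [slope_def_field, div_nonneg_iff]
  right
  exact ⟨sub_nonpos.2 (hmax s ⟨le_of_lt hs'.1, le_of_lt hs'.2⟩), sub_nonpos.2 (le_of_lt hs'.2)⟩

/-- Second derivative test at a local maximum. -/
lemma deriv2_nonpos_of_isLocalMax {f : ℝ → ℝ} {x : ℝ}
    (hmax : IsLocalMax f x)
    (hf : ∀ᶠ y in 𝓝 x, DifferentiableAt ℝ f y)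
    (hf' : DifferentiableAt ℝ (deriv f) x) :
    deriv (deriv f) x ≤ 0 := by
  by_contra hpos
  push_neg at hpos
  have h0 : deriv f x = 0 := hmax.deriv_eq_zero
  have hd : HasDerivAt (deriv f) (deriv (deriv f) x) x := hf'.hasDerivAt
  have hslope := hasDerivAt_iff_tendsto_slope.1 hd
  have hev : ∀ᶠ y in 𝓝[>] x, 0 < slope (deriv f) x y :=
    (hslope.eventually (eventually_gt_nhds hpos)).filter_mono
      (nhdsWithin_mono _ (fun y hy => ne_of_gt hy))
  obtain ⟨b, hb, hIoo⟩ := mem_nhdsGT_iff_exists_Ioo_subset.1 hev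
  obtain ⟨r, hr, hball⟩ := Metric.eventually_nhds_iff_ball.1 (hf.and hmax)
  set e := min b (x + r) with he
  have hxe : x < e := lt_min hb (by linarith)
  set m := (x + e) / 2 with hm
  have hxm : x < m := by simp only [hm]; linarith
  have hme : m < e := by simp only [hm]; linarith
  have hsub : Set.Icc x m ⊆ Metric.ball x r := by
    intro y hy
    rw [Metric.mem_ball, Real.dist_eq, abs_lt]
    constructor
    · linarith [hy.1]
    · have : m < x + r := lt_of_lt_of_le hme (min_le_right _ _)
      linarith [hy.2]
  have hmono : StrictMonoOn f (Set.Icc x m) := by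
    apply strictMonoOn_of_deriv_pos (convex_Icc x m)
    · intro y hy
      exact ((hball y (hsub hy)).1).continuousAt.continuousWithinAt
    · intro y hy
      rw [interior_Icc] at hy
      have hyb : y ∈ Set.Ioo x b := ⟨hy.1, lt_of_lt_of_le (lt_trans hy.2 hme) (min_le_left _ _)⟩
      have hsl := hIoo hyb
      simp only [Set.mem_setOf_eq] at hsl
      rw [slope_def_field, h0, sub_zero] at hsl
      have hyx : 0 < y - x := sub_pos.2 hy.1
      have := mul_pos hsl hyx
      rwa [div_mul_cancel₀] at this
      exact ne_of_gt hyx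
  have h1 : f x < f m := hmono ⟨le_refl x, le_of_lt hxm⟩ ⟨le_of_lt hxm, le_refl m⟩ hxm
  have h2 : f m ≤ f x := (hball m (hsub ⟨le_of_lt hxm, le_refl m⟩)).2
  linarith

lemma hasDerivAt_grim_inner (a c y : ℝ) : HasDerivAt (fun z : ℝ => a * (z - c)) a y := by
  simpa using (((hasDerivAt_id y).sub_const c).const_mul a)

lemma hasDerivAt_grim (a c : ℝ) (ha : a ≠ 0) {y : ℝ} (h1 : Real.sin (a*(y-c)) ≠ 0) :
    HasDerivAt (fun z => -a⁻¹ * Real.log (Real.sin (a * (z - c))))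
      (-(Real.cos (a*(y-c)) / Real.sin (a*(y-c)))) y := by
  have h2 : HasDerivAt (fun z : ℝ => Real.sin (a * (z - c)))
      (Real.cos (a * (y - c)) * a) y :=
    (Real.hasDerivAt_sin _).comp y (hasDerivAt_grim_inner a c y)
  have h3 : HasDerivAt (fun z : ℝ => Real.log (Real.sin (a * (z - c))))
      ((Real.sin (a * (y - c)))⁻¹ * (Real.cos (a * (y - c)) * a)) y :=
    HasDerivAt.comp (h₂ := Real.log) y (Real.hasDerivAt_log h1) h2
  have h4 := h3.const_mul (-a⁻¹)
  refine h4.congr_deriv (Eq.symm ?_)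
  field_simp

lemma hasDerivAt_grim' (a c : ℝ) {y : ℝ} (h1 : Real.sin (a*(y-c)) ≠ 0) :
    HasDerivAt (fun z => -(Real.cos (a*(z-c)) / Real.sin (a*(z-c))))
      (a / Real.sin (a*(y-c))^2) y := by
  have hc : HasDerivAt (fun z : ℝ => Real.cos (a * (z - c)))
      (-Real.sin (a * (y - c)) * a) y :=
    (Real.hasDerivAt_cos _).comp y (hasDerivAt_grim_inner a c y)
  have hs : HasDerivAt (fun z : ℝ => Real.sin (a * (z - c)))
      (Real.cos (a * (y - c)) * a) y :=
    (Real.hasDerivAt_sin _).comp y (hasDerivAt_grim_inner a c y)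
  have h4 := (hc.div hs h1).neg
  have key : Real.sin (a*(y-c))^2 + Real.cos (a*(y-c))^2 = 1 := Real.sin_sq_add_cos_sq _
  refine h4.congr_deriv (Eq.symm ?_)
  field_simp
  linear_combination (-a) * key

/-- **Lemma 2.2** (Grim Reaper barrier on a slab). The Grim Reaper
`v(t,y) = −a⁻¹ log (sin (a (y − c))) + a t + β` is an exact solution of the graphical
curve shortening flow which blows up at the edges of the slab `(c, c + π/a)`; hence any
bounded continuous solution `u` on `[t₁,t₂] × (c, c + π/a)`, smooth and solving the
equation on the open region, which lies below `v` at `t = t₁`, stays below `v`. -/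
theorem grim_reaper_barrier_comparison (a c β t₁ t₂ : ℝ) (ha : 0 < a) (ht : t₁ < t₂)
    (u : ℝ → ℝ → ℝ)
    (hu_cont : ContinuousOn (fun p : ℝ × ℝ => u p.1 p.2)
      (Set.Icc t₁ t₂ ×ˢ Set.Ioo c (c + Real.pi / a)))
    (hu_bdd : ∃ C : ℝ, ∀ t ∈ Set.Icc t₁ t₂, ∀ y ∈ Set.Ioo c (c + Real.pi / a),
      |u t y| ≤ C)
    (hu_smooth : ContDiffOn ℝ (⊤ : ℕ∞) (fun p : ℝ × ℝ => u p.1 p.2)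
      (Set.Ioo t₁ t₂ ×ˢ Set.Ioo c (c + Real.pi / a)))
    (hu_pde : ∀ t ∈ Set.Ioo t₁ t₂, ∀ y ∈ Set.Ioo c (c + Real.pi / a),
      deriv (fun s => u s y) t = deriv (deriv (u t)) y / (1 + (deriv (u t) y) ^ 2))
    (h_initial : ∀ y ∈ Set.Ioo c (c + Real.pi / a),
      u t₁ y ≤ -a⁻¹ * Real.log (Real.sin (a * (y - c))) + a * t₁ + β) :
    ∀ t ∈ Set.Icc t₁ t₂, ∀ y ∈ Set.Ioo c (c + Real.pi / a),
      u t y ≤ -a⁻¹ * Real.log (Real.sin (a * (y - c))) + a * t + β := by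
  obtain ⟨C, hC⟩ := hu_bdd
  have hπa : 0 < Real.pi / a := div_pos Real.pi_pos ha
  have hπeq : a * (Real.pi / a) = Real.pi := by field_simp
  set J := Set.Ioo c (c + Real.pi / a) with hJdef
  have hJopen : IsOpen J := isOpen_Ioo
  have hθ : ∀ y ∈ J, 0 < a * (y - c) ∧ a * (y - c) < Real.pi := by
    intro y hy
    refine ⟨mul_pos ha (sub_pos.2 hy.1), ?_⟩
    have h2 : a * (y - c) < a * (Real.pi / a) :=
      mul_lt_mul_of_pos_left (by linarith [hy.2]) ha
    linarith [hπeq ▸ h2]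
  have hsinpos : ∀ y ∈ J, 0 < Real.sin (a * (y - c)) := fun y hy =>
    Real.sin_pos_of_pos_of_lt_pi (hθ y hy).1 (hθ y hy).2
  have hC0 : 0 ≤ C :=
    le_trans (abs_nonneg _)
      (hC t₁ ⟨le_refl _, le_of_lt ht⟩ (c + Real.pi / a / 2) ⟨by linarith, by linarith⟩)
  set M := C + |a * t₁| + |β| + 1 with hMdef
  set δ := min (Real.pi / (4 * a)) (Real.exp (-(a * M)) / a) with hδdef
  have hδpos : 0 < δ := lt_min (by positivity) (by positivity)
  have hδπ : δ ≤ Real.pi / (4 * a) := min_le_left _ _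
  have hδexp : a * δ ≤ Real.exp (-(a * M)) := by
    have h1 : a * δ ≤ a * (Real.exp (-(a * M)) / a) :=
      mul_le_mul_of_nonneg_left (min_le_right _ _) ha.le
    have h2 : a * (Real.exp (-(a * M)) / a) = Real.exp (-(a * M)) := by field_simp
    linarith
  have hδslab : c + δ < c + Real.pi / a - δ := by
    have : Real.pi / (4 * a) = (Real.pi / a) / 4 := by ring
    have := hδπ
    have hq : δ ≤ (Real.pi / a) / 4 := by linarith [hδπ, this]
    linarith
  -- the boundary estimate near the edges of the slab
  have hbdry : ∀ t ∈ Set.Icc t₁ t₂, ∀ y ∈ J, (y ≤ c + δ ∨ c + Real.pi / a - δ ≤ y) →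
      u t y ≤ -a⁻¹ * Real.log (Real.sin (a * (y - c))) + a * t + β := by
    intro t htm y hy hcase
    have hs := hsinpos y hy
    have hsle : Real.sin (a * (y - c)) ≤ a * δ := by
      rcases hcase with h | h
      · calc Real.sin (a * (y - c)) ≤ a * (y - c) := Real.sin_le (le_of_lt (hθ y hy).1)
          _ ≤ a * δ := mul_le_mul_of_nonneg_left (by linarith [hy.1]) ha.le
      · have heq : Real.sin (a * (y - c)) = Real.sin (Real.pi - a * (y - c)) :=
          (Real.sin_pi_sub _).symm
        rw [heq]
        have h1 : Real.pi - a * (y - c) ≤ a * δ := by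
          have h2 : a * (Real.pi / a - δ) ≤ a * (y - c) :=
            mul_le_mul_of_nonneg_left (by linarith) ha.le
          have h3 : a * (Real.pi / a - δ) = Real.pi - a * δ := by
            rw [mul_sub, hπeq]
          linarith
        calc Real.sin (Real.pi - a * (y - c)) ≤ Real.pi - a * (y - c) :=
              Real.sin_le (by linarith [(hθ y hy).2])
          _ ≤ a * δ := h1
    have hlog : Real.log (Real.sin (a * (y - c))) ≤ -(a * M) :=
      (Real.log_le_iff_le_exp hs).2 (le_trans hsle hδexp)
    have hML : M ≤ -a⁻¹ * Real.log (Real.sin (a * (y - c))) := by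
      have ha' : (0:ℝ) < a⁻¹ := inv_pos.2 ha
      have h1 : a * M ≤ -Real.log (Real.sin (a * (y - c))) := by linarith
      have h2 : a⁻¹ * (a * M) ≤ a⁻¹ * (-Real.log (Real.sin (a * (y - c)))) :=
        mul_le_mul_of_nonneg_left h1 ha'.le
      have h3 : a⁻¹ * (a * M) = M := by field_simp
      linarith
    have hu : u t y ≤ C := le_trans (le_abs_self _) (hC t htm y hy)
    have hat : a * t₁ ≤ a * t := mul_le_mul_of_nonneg_left htm.1 ha.le
    have h5 := neg_abs_le (a * t₁)
    have h6 := neg_abs_le β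
    have : C + 1 ≤ M + a * t + β := by
      simp only [hMdef]; linarith
    linarith
  -- the main interior claim
  have hmain : ∀ T ∈ Set.Ioo t₁ t₂, ∀ ε : ℝ, 0 < ε → ∀ t ∈ Set.Icc t₁ T, ∀ y ∈ J,
      u t y ≤ (-a⁻¹ * Real.log (Real.sin (a * (y - c))) + a * t + β) + ε * (t - t₁) := by
    intro T hT ε hε t htm y hy
    have hεt : 0 ≤ ε * (t - t₁) := mul_nonneg hε.le (by linarith [htm.1])
    by_cases hymid : y ∈ Set.Icc (c + δ) (c + Real.pi / a - δ)
    case neg =>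
      have hcase : y ≤ c + δ ∨ c + Real.pi / a - δ ≤ y := by
        simp only [Set.mem_Icc, not_and_or, not_le] at hymid
        rcases hymid with h | h
        · exact Or.inl h.le
        · exact Or.inr h.le
      have hb := hbdry t ⟨htm.1, le_trans htm.2 hT.2.le⟩ y hy hcase
      linarith
    case pos =>
      set W : ℝ × ℝ → ℝ := fun p =>
        u p.1 p.2 - (-a⁻¹ * Real.log (Real.sin (a * (p.2 - c))) + a * p.1 + β)
          - ε * (p.1 - t₁) with hWdef
      set K := Set.Icc t₁ T ×ˢ Set.Icc (c + δ) (c + Real.pi / a - δ) with hKdef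
      have hIccJ : Set.Icc (c + δ) (c + Real.pi / a - δ) ⊆ J := fun z hz =>
        ⟨by linarith [hz.1], by linarith [hz.2]⟩
      have hKsub : K ⊆ Set.Icc t₁ t₂ ×ˢ J := fun p hp =>
        ⟨⟨hp.1.1, le_trans hp.1.2 hT.2.le⟩, hIccJ hp.2⟩
      have hKc : IsCompact K := isCompact_Icc.prod isCompact_Icc
      have hKne : K.Nonempty :=
        ⟨(t₁, c + δ), ⟨⟨le_refl _, hT.1.le⟩, ⟨le_refl _, hδslab.le⟩⟩⟩
      have hWc : ContinuousOn W K := by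
        apply ContinuousOn.sub
        apply ContinuousOn.sub
        · exact hu_cont.mono hKsub
        · apply ContinuousOn.add
          apply ContinuousOn.add
          · apply ContinuousOn.mul continuousOn_const
            apply ContinuousOn.log
            · exact (Real.continuous_sin.comp
                ((continuous_const.mul (continuous_snd.sub continuous_const)))).continuousOn
            · intro p hp
              exact (hsinpos p.2 (hIccJ hp.2)).ne'
          · exact (continuous_const.mul continuous_fst).continuousOn
          · exact continuousOn_const
        · exact (continuous_const.mul (continuous_fst.sub continuous_const)).continuousOn
      obtain ⟨p, hpK, hpmax⟩ := hKc.exists_isMaxOn hKne hWc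
      obtain ⟨t', y'⟩ := p
      by_cases hneg : W (t', y') ≤ 0
      · have hmem : (t, y) ∈ K := ⟨htm, hymid⟩
        have := hpmax hmem
        simp only [hWdef, Set.mem_setOf_eq] at this hneg
        linarith
      push_neg at hneg
      exfalso
      have ht'12 : t₁ ≤ t' := hpK.1.1
      have hy'J : y' ∈ J := hIccJ hpK.2
      have ht'1 : t₁ < t' := by
        rcases eq_or_lt_of_le ht'12 with h | h
        · exfalso
          have h0 := h_initial y' hy'J
          have : W (t', y') ≤ 0 := by
            simp only [hWdef]
            rw [← h]
            have hz : ε * (t₁ - t₁) = 0 := by ring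
            linarith
          linarith
        · exact h
      have ht'2 : t' < t₂ := lt_of_le_of_lt hpK.1.2 hT.2
      have hWbd : ∀ z, z ∈ J → (z ≤ c + δ ∨ c + Real.pi / a - δ ≤ z) → W (t', z) ≤ 0 := by
        intro z hz hzc
        have hb := hbdry t' ⟨ht'12, ht'2.le⟩ z hz hzc
        have : 0 ≤ ε * (t' - t₁) := mul_nonneg hε.le (by linarith)
        simp only [hWdef]
        linarith
      have hy'l : c + δ < y' := by
        rcases eq_or_lt_of_le hpK.2.1 with h | h
        · exfalso
          have := hWbd y' hy'J (Or.inl (le_of_eq h.symm))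
          linarith
        · exact h
      have hy'r : y' < c + Real.pi / a - δ := by
        rcases eq_or_lt_of_le hpK.2.2 with h | h
        · exfalso
          have := hWbd y' hy'J (Or.inr h.ge)
          linarith
        · exact h
      -- notation
      set G : ℝ → ℝ := fun z => -a⁻¹ * Real.log (Real.sin (a * (z - c))) with hGdef
      set Gd : ℝ → ℝ := fun z => -(Real.cos (a * (z - c)) / Real.sin (a * (z - c))) with hGddef
      have hGd : ∀ z ∈ J, HasDerivAt G (Gd z) z := fun z hz =>
        hasDerivAt_grim a c ha.ne' (hsinpos z hz).ne'
      have hGderiv : ∀ z ∈ J, deriv G z = Gd z := fun z hz => (hGd z hz).deriv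
      have hGd' : HasDerivAt Gd (a / Real.sin (a * (y' - c)) ^ 2) y' :=
        hasDerivAt_grim' a c (hsinpos y' hy'J).ne'
      -- smoothness of the spatial slice
      have hUsm : ContDiffOn ℝ (⊤ : ℕ∞) (u t') J := by
        have h1 : ContDiffOn ℝ (⊤ : ℕ∞) ((fun p : ℝ × ℝ => u p.1 p.2) ∘ (fun z : ℝ => (t', z))) J :=
          hu_smooth.comp ((contDiff_const.prodMk contDiff_id).contDiffOn)
            (fun z hz => ⟨⟨ht'1, ht'2⟩, hz⟩)
        exact h1
      have hUdiff : ∀ z ∈ J, DifferentiableAt ℝ (u t') z := fun z hz =>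
        (hUsm.contDiffAt (hJopen.mem_nhds hz)).differentiableAt (by simp)
      have hU'sm : ContDiffOn ℝ (⊤ : ℕ∞) (deriv (u t')) J :=
        hUsm.deriv_of_isOpen hJopen (by simp)
      have hU'diff : DifferentiableAt ℝ (deriv (u t')) y' :=
        (hU'sm.contDiffAt (hJopen.mem_nhds hy'J)).differentiableAt (by simp)
      -- the slice function and its local max
      set f : ℝ → ℝ := fun z => u t' z - G z with hfdef
      have hJnb : J ∈ 𝓝 y' := hJopen.mem_nhds hy'J
      have hflm : IsLocalMax f y' := by
        have hmem : Set.Ioo (c + δ) (c + Real.pi / a - δ) ∈ 𝓝 y' :=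
          isOpen_Ioo.mem_nhds ⟨hy'l, hy'r⟩
        refine Filter.eventually_of_mem hmem (fun z hz => ?_)
        have hzK : (t', z) ∈ K := ⟨hpK.1, ⟨hz.1.le, hz.2.le⟩⟩
        have h := hpmax hzK
        simp only [hWdef, Set.mem_setOf_eq] at h
        simp only [hfdef, hGdef]
        linarith
      have hfd : ∀ z ∈ J, DifferentiableAt ℝ f z := fun z hz =>
        (hUdiff z hz).sub (hGd z hz).differentiableAt
      have hf_ev_diff : ∀ᶠ z in 𝓝 y', DifferentiableAt ℝ f z :=
        Filter.eventually_of_mem hJnb hfd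
      have hfderiv : ∀ z ∈ J, deriv f z = deriv (u t') z - Gd z := by
        intro z hz
        rw [hfdef]
        rw [deriv_fun_sub (hUdiff z hz) (hGd z hz).differentiableAt, hGderiv z hz]
      have hf'_ev : deriv f =ᶠ[𝓝 y'] fun z => deriv (u t') z - Gd z :=
        Filter.eventually_of_mem hJnb hfderiv
      have hf'diff : DifferentiableAt ℝ (deriv f) y' := by
        have h1 : DifferentiableAt ℝ (fun z => deriv (u t') z - Gd z) y' :=
          hU'diff.sub hGd'.differentiableAt
        exact (hf'_ev.differentiableAt_iff).2 h1
      -- first derivative vanishes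
      have hd0 : deriv f y' = 0 := hflm.deriv_eq_zero
      have hq : deriv (u t') y' = Gd y' := by
        have := hfderiv y' hy'J
        rw [hd0] at this
        linarith [this]
      -- second derivative inequality
      have hdd : deriv (deriv f) y' ≤ 0 :=
        deriv2_nonpos_of_isLocalMax hflm hf_ev_diff hf'diff
      have hsplit : deriv (deriv f) y'
          = deriv (deriv (u t')) y' - a / Real.sin (a * (y' - c)) ^ 2 := by
        rw [hf'_ev.deriv_eq, deriv_fun_sub hU'diff hGd'.differentiableAt, hGd'.deriv]
      have hUdd : deriv (deriv (u t')) y' ≤ a / Real.sin (a * (y' - c)) ^ 2 := by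
        rw [hsplit] at hdd; linarith
      -- the PDE gives a bound on the time derivative
      have hpde := hu_pde t' ⟨ht'1, ht'2⟩ y' hy'J
      have hsne : Real.sin (a * (y' - c)) ≠ 0 := (hsinpos y' hy'J).ne'
      have hden : 1 + (deriv (u t') y') ^ 2 = (Real.sin (a * (y' - c)) ^ 2)⁻¹ := by
        rw [hq]
        simp only [hGddef]
        have key : Real.sin (a * (y' - c)) ^ 2 + Real.cos (a * (y' - c)) ^ 2 = 1 :=
          Real.sin_sq_add_cos_sq _
        field_simp
        exact key
      have hut : deriv (fun s => u s y') t' ≤ a := by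
        rw [hpde, hden, div_eq_mul_inv, inv_inv]
        calc deriv (deriv (u t')) y' * Real.sin (a * (y' - c)) ^ 2
            ≤ (a / Real.sin (a * (y' - c)) ^ 2) * Real.sin (a * (y' - c)) ^ 2 :=
              mul_le_mul_of_nonneg_right hUdd (sq_nonneg _)
          _ = a := div_mul_cancel₀ a (pow_ne_zero 2 hsne)
      -- the time slice
      have hTsm : ContDiffOn ℝ (⊤ : ℕ∞) (fun s => u s y') (Set.Ioo t₁ t₂) := by
        have h1 : ContDiffOn ℝ (⊤ : ℕ∞) ((fun p : ℝ × ℝ => u p.1 p.2) ∘ (fun s : ℝ => (s, y')))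
            (Set.Ioo t₁ t₂) :=
          hu_smooth.comp ((contDiff_id.prodMk contDiff_const).contDiffOn)
            (fun s hs' => ⟨hs', hy'J⟩)
        exact h1
      have hTdiff : DifferentiableAt ℝ (fun s => u s y') t' :=
        (hTsm.contDiffAt (isOpen_Ioo.mem_nhds ⟨ht'1, ht'2⟩)).differentiableAt (by simp)
      set h : ℝ → ℝ := fun s => u s y' - (a + ε) * s with hhdef
      have hlin : DifferentiableAt ℝ (fun s : ℝ => (a + ε) * s) t' :=
        (differentiableAt_id.const_mul _)
      have hhd : DifferentiableAt ℝ h t' := hTdiff.sub hlin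
      have hhmax : ∀ s ∈ Set.Icc t₁ t', h s ≤ h t' := by
        intro s hsI
        have hmem : (s, y') ∈ K := ⟨⟨hsI.1, le_trans hsI.2 hpK.1.2⟩, hpK.2⟩
        have hw := hpmax hmem
        simp only [hWdef, Set.mem_setOf_eq] at hw
        simp only [hhdef]
        linarith
      have h0 : 0 ≤ deriv h t' := deriv_nonneg_of_isMaxOn_Icc ht'1 hhd hhmax
      have hderivh : deriv h t' = deriv (fun s => u s y') t' - (a + ε) := by
        rw [hhdef]
        rw [deriv_fun_sub hTdiff hlin]
        have : deriv (fun s : ℝ => (a + ε) * s) t' = a + ε := by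
          have := ((hasDerivAt_id t').const_mul (a + ε)).deriv
          simpa using this
        rw [this]
      rw [hderivh] at h0
      linarith
  -- remove ε and extend to the closed slab, first for t < t₂
  have hmain2 : ∀ t ∈ Set.Icc t₁ t₂, t < t₂ → ∀ y ∈ J,
      u t y ≤ -a⁻¹ * Real.log (Real.sin (a * (y - c))) + a * t + β := by
    intro t htm hlt y hy
    rcases eq_or_lt_of_le htm.1 with h | h
    · rw [← h]; exact h_initial y hy
    · set T := (t + t₂) / 2 with hTdef
      have hTm : T ∈ Set.Ioo t₁ t₂ := ⟨by simp only [hTdef]; linarith, by simp only [hTdef]; linarith⟩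
      have htT : t ∈ Set.Icc t₁ T := ⟨htm.1, by simp only [hTdef]; linarith⟩
      have htsub : 0 < t - t₁ := by linarith
      refine le_of_forall_pos_le_add ?_
      intro ε hε
      have hε' : 0 < ε / (t - t₁) := div_pos hε htsub
      have hb := hmain T hTm (ε / (t - t₁)) hε' t htT y hy
      have hcan : ε / (t - t₁) * (t - t₁) = ε := div_mul_cancel₀ ε (ne_of_gt htsub)
      rw [hcan] at hb
      linarith
  intro t htm y hy
  rcases lt_or_eq_of_le htm.2 with hlt | heq
  · exact hmain2 t htm hlt y hy
  · subst heq
    have hslice : ContinuousWithinAt (fun s => u s y) (Set.Icc t₁ t) t := by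
      have h1 : ContinuousOn (fun s => u s y) (Set.Icc t₁ t) :=
        hu_cont.comp ((continuous_id.prodMk continuous_const).continuousOn)
          (fun s hs => ⟨hs, hy⟩)
      exact h1 t ⟨ht.le, le_refl _⟩
    have hne : (𝓝[Set.Ioo t₁ t] t).NeBot := right_nhdsWithin_Ioo_neBot ht
    have h1 : Tendsto (fun s => u s y) (𝓝[Set.Ioo t₁ t] t) (𝓝 (u t y)) :=
      (hslice.mono Set.Ioo_subset_Icc_self)
    have h2 : Tendsto (fun s => -a⁻¹ * Real.log (Real.sin (a * (y - c))) + a * s + β)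
        (𝓝[Set.Ioo t₁ t] t)
        (𝓝 (-a⁻¹ * Real.log (Real.sin (a * (y - c))) + a * t + β)) := by
      exact ((continuous_const.add (continuous_const.mul continuous_id)).add
        continuous_const).continuousWithinAt
    refine le_of_tendsto_of_tendsto h1 h2 ?_
    filter_upwards [self_mem_nhdsWithin] with s hs
    exact hmain2 s ⟨hs.1.le, hs.2.le⟩ hs.2 y hy
end
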